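/- Let A be an I-modal ririg. The maps F ↦ θ_F = {(x,y) : (x→y)·(y→x) ∈ F} and θ ↦ F_θ = {x : (x,1) ∈ θ} are mutually inverse order isomorphisms between the lattice of I-filters of A (ordered by inclusion) and the congruence lattice of A. -/

import Mathlib

/-- An integral residuated rig (ririg). -/
class Ririg (A : Type*) extends CommMonoid A, SemilatticeSup A, OrderBot A, OrderTop A, HImp A where
  one_eq_top : (1 : A) = ⊤
  mul_sup : ∀ x y z : A, x * (y ⊔ z) = x * y ⊔ x * z
  mul_bot : ∀ x : A, x * ⊥ = ⊥
  residuation : ∀ a b c : A, a * b ≤ c ↔ a ≤ b ⇨ c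

/-- A modal operator on a ririg. -/
def IsModal {A : Type*} [Ririg A] (m : A → A) : Prop :=
  m 1 = 1 ∧ ∀ x y : A, m (x ⇨ y) ≤ m x ⇨ m y

/-- Interpretation of an I-block (finite composition of modal operators). -/
def blockApp {A ι : Type*} (f : ι → A → A) : List ι → A → A
  | [] => id
  | i :: L => f i ∘ blockApp f L

/-- I-filter. -/
def IsIFilter {A ι : Type*} [Ririg A] (f : ι → A → A) (F : Set A) : Prop :=
  F.Nonempty ∧ (∀ x y : A, x ∈ F → x ≤ y → y ∈ F) ∧
    (∀ x y : A, x ∈ F → y ∈ F → x * y ∈ F) ∧ (∀ i : ι, ∀ x : A, x ∈ F → f i x ∈ F)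

/-- Congruence of an I-modal ririg. -/
def IsRirigCon {A ι : Type*} [Ririg A] (f : ι → A → A) (θ : A → A → Prop) : Prop :=
  Equivalence θ ∧
    (∀ a b c d : A, θ a b → θ c d → θ (a ⊔ c) (b ⊔ d)) ∧
    (∀ a b c d : A, θ a b → θ c d → θ (a * c) (b * d)) ∧
    (∀ a b c d : A, θ a b → θ c d → θ (a ⇨ c) (b ⇨ d)) ∧
    (∀ i : ι, ∀ a b : A, θ a b → θ (f i a) (f i b))

/-!
Write `x ⇔ y` for `(x ⇨ y) * (y ⇨ x)`. Residuation gives `(a ⇔ b) * (c ⇔ d) ≤ (a ∘ c) ⇔ (b ∘ d)`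
for `∘ ∈ {⊔, *, ⇨}`, `(x ⇔ y) * (y ⇔ z) ≤ x ⇔ z`, and `m (x ⇔ y) ^ 2 ≤ m x ⇔ m y` for a modal `m`;
since an I-filter is an up-set closed under `*` and the `m`s, `θ_F` is a congruence.
Conversely, in a congruence `x θ y` gives `(x ⇔ y) θ 1`, and `(x ⇔ y) θ 1` gives `x θ (x ⊔ y) θ y`
because `(x ⇔ y) * x ≤ y` and `(x ⇔ y) * y ≤ x`. Finally `x ⇔ 1 = x`, so `F_{θ_F} = F` and
`θ_F ⊆ θ_G` already forces `F ⊆ G`.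
-/

namespace Ririg

variable {A : Type*} [Ririg A]

protected lemma le_one (x : A) : x ≤ 1 := one_eq_top (A := A) ▸ le_top

instance : IsOrderedMonoid A where
  mul_le_mul_left a b h c := by
    rw [mul_comm a, mul_comm b, ← sup_eq_right, ← mul_sup, sup_eq_right.mpr h]

protected lemma mul_le_left (a b : A) : a * b ≤ a := mul_le_of_le_one_right' (Ririg.le_one b)

protected lemma mul_le_right (a b : A) : a * b ≤ b := mul_le_of_le_one_left' (Ririg.le_one a)

protected lemma le_himp_iff {a b c : A} : a ≤ b ⇨ c ↔ a * b ≤ c := (residuation a b c).symm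

lemma himp_mul_le (x y : A) : (x ⇨ y) * x ≤ y := Ririg.le_himp_iff.mp le_rfl

protected lemma himp_eq_one {x y : A} (h : x ≤ y) : x ⇨ y = 1 :=
  (Ririg.le_one _).antisymm (Ririg.le_himp_iff.mpr (by rwa [one_mul]))

protected lemma himp_self (x : A) : x ⇨ x = 1 := Ririg.himp_eq_one le_rfl

protected lemma one_himp (x : A) : 1 ⇨ x = x :=
  ((mul_one (1 ⇨ x)).symm.trans_le (himp_mul_le 1 x)).antisymm
    (Ririg.le_himp_iff.mpr (mul_one x).le)

def biimp (x y : A) : A := (x ⇨ y) * (y ⇨ x)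

lemma biimp_comm (x y : A) : biimp x y = biimp y x := mul_comm _ _

lemma biimp_self (x : A) : biimp x x = 1 := by
  rw [biimp, Ririg.himp_self, one_mul]

lemma biimp_one (x : A) : biimp x 1 = x := by
  rw [biimp, Ririg.himp_eq_one (Ririg.le_one x), Ririg.one_himp, one_mul]

lemma biimp_mul_le (x y : A) : biimp x y * x ≤ y :=
  (mul_le_mul_left (Ririg.mul_le_left _ _) x).trans (himp_mul_le x y)

lemma himp_mul_himp_le (x y z : A) : (x ⇨ y) * (y ⇨ z) ≤ x ⇨ z := by
  rw [Ririg.le_himp_iff]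
  calc (x ⇨ y) * (y ⇨ z) * x = (y ⇨ z) * ((x ⇨ y) * x) := by rw [mul_comm (x ⇨ y), mul_assoc]
    _ ≤ (y ⇨ z) * y := mul_le_mul_right (himp_mul_le x y) _
    _ ≤ z := himp_mul_le y z

lemma himp_mul_himp_le_sup_himp_sup (a b c d : A) : (a ⇨ b) * (c ⇨ d) ≤ a ⊔ c ⇨ b ⊔ d := by
  rw [Ririg.le_himp_iff, mul_sup]
  apply sup_le
  · calc (a ⇨ b) * (c ⇨ d) * a = (c ⇨ d) * ((a ⇨ b) * a) := by rw [mul_comm (a ⇨ b), mul_assoc]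
      _ ≤ b := (Ririg.mul_le_right _ _).trans (himp_mul_le a b)
      _ ≤ b ⊔ d := le_sup_left
  · calc (a ⇨ b) * (c ⇨ d) * c = (a ⇨ b) * ((c ⇨ d) * c) := mul_assoc _ _ _
      _ ≤ d := (Ririg.mul_le_right _ _).trans (himp_mul_le c d)
      _ ≤ b ⊔ d := le_sup_right

lemma himp_mul_himp_le_mul_himp_mul (a b c d : A) : (a ⇨ b) * (c ⇨ d) ≤ a * c ⇨ b * d := by
  rw [Ririg.le_himp_iff, mul_mul_mul_comm]
  exact mul_le_mul' (himp_mul_le a b) (himp_mul_le c d)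

lemma himp_mul_himp_le_himp_himp_himp (a b c d : A) :
    (b ⇨ a) * (c ⇨ d) ≤ (a ⇨ c) ⇨ b ⇨ d := by
  rw [Ririg.le_himp_iff, Ririg.le_himp_iff]
  calc (b ⇨ a) * (c ⇨ d) * (a ⇨ c) * b = ((b ⇨ a) * b) * (a ⇨ c) * (c ⇨ d) := by ac_rfl
    _ ≤ a * (a ⇨ c) * (c ⇨ d) := by gcongr; exact himp_mul_le b a
    _ ≤ c * (c ⇨ d) := by gcongr; rw [mul_comm]; exact himp_mul_le a c
    _ ≤ d := by rw [mul_comm]; exact himp_mul_le c d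

lemma biimp_mul_biimp_le (x y z : A) : biimp x y * biimp y z ≤ biimp x z := by
  rw [biimp, biimp, mul_mul_mul_comm, mul_comm (y ⇨ x)]
  exact mul_le_mul' (himp_mul_himp_le x y z) (himp_mul_himp_le z y x)

lemma biimp_mul_biimp_le_biimp_sup (a b c d : A) :
    biimp a b * biimp c d ≤ biimp (a ⊔ c) (b ⊔ d) := by
  rw [biimp, biimp, mul_mul_mul_comm]
  exact mul_le_mul' (himp_mul_himp_le_sup_himp_sup a b c d) (himp_mul_himp_le_sup_himp_sup b a d c)

lemma biimp_mul_biimp_le_biimp_mul (a b c d : A) :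
    biimp a b * biimp c d ≤ biimp (a * c) (b * d) := by
  rw [biimp, biimp, mul_mul_mul_comm]
  exact mul_le_mul' (himp_mul_himp_le_mul_himp_mul a b c d) (himp_mul_himp_le_mul_himp_mul b a d c)

lemma biimp_mul_biimp_le_biimp_himp (a b c d : A) :
    biimp a b * biimp c d ≤ biimp (a ⇨ c) (b ⇨ d) := by
  rw [biimp, biimp, mul_comm (a ⇨ b), mul_mul_mul_comm]
  exact mul_le_mul' (himp_mul_himp_le_himp_himp_himp a b c d)
    (himp_mul_himp_le_himp_himp_himp b a d c)

end Ririg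

open Ririg

section

variable {A ι : Type*} [Ririg A] {f : ι → A → A}

lemma IsModal.monotone {m : A → A} (hm : IsModal m) : Monotone m := by
  intro x y h
  have h1 : 1 ≤ m x ⇨ m y := by simpa [Ririg.himp_eq_one h, hm.1] using hm.2 x y
  simpa using Ririg.le_himp_iff.mp h1

lemma IsModal.mul_map_biimp_le {m : A → A} (hm : IsModal m) (a b : A) :
    m (biimp a b) * m (biimp a b) ≤ biimp (m a) (m b) :=
  mul_le_mul' ((hm.monotone (Ririg.mul_le_left _ _)).trans (hm.2 a b))
    ((hm.monotone (Ririg.mul_le_right _ _)).trans (hm.2 b a))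

/-- The relation `θ_F` of a set `F`. -/
def conOfFilter (F : Set A) (x y : A) : Prop := biimp x y ∈ F

/-- The `1`-class `F_θ` of a relation `θ`. -/
def filterOfCon (θ : A → A → Prop) : Set A := {x | θ x 1}

lemma filterOfCon_conOfFilter (F : Set A) : filterOfCon (conOfFilter F) = F := by
  ext x
  simp only [filterOfCon, conOfFilter, Set.mem_ofPred_eq, biimp_one]

lemma conOfFilter_le_conOfFilter_iff {F G : Set A} : conOfFilter F ≤ conOfFilter G ↔ F ⊆ G := by
  refine ⟨fun h x hx => ?_, fun h x y hxy => h hxy⟩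
  have := h x 1 (by rwa [conOfFilter, biimp_one])
  rwa [conOfFilter, biimp_one] at this

namespace IsIFilter

variable {F : Set A}

lemma one_mem (hF : IsIFilter f F) : (1 : A) ∈ F :=
  hF.1.elim fun x hx => hF.2.1 x 1 hx (Ririg.le_one x)

lemma mem_of_mul_le (hF : IsIFilter f F) {x y z : A} (hx : x ∈ F) (hy : y ∈ F) (h : x * y ≤ z) :
    z ∈ F :=
  hF.2.1 _ _ (hF.2.2.1 x y hx hy) h

lemma isRirigCon_conOfFilter (hf : ∀ i, IsModal (f i)) (hF : IsIFilter f F) :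
    IsRirigCon f (conOfFilter F) := by
  refine ⟨⟨fun x => ?_, fun h => ?_, fun hxy hyz => ?_⟩, fun a b c d hab hcd => ?_,
    fun a b c d hab hcd => ?_, fun a b c d hab hcd => ?_, fun i a b h => ?_⟩
  · rw [conOfFilter, biimp_self]
    exact hF.one_mem
  · rwa [conOfFilter, biimp_comm]
  · exact hF.mem_of_mul_le hxy hyz (biimp_mul_biimp_le _ _ _)
  · exact hF.mem_of_mul_le hab hcd (biimp_mul_biimp_le_biimp_sup a b c d)
  · exact hF.mem_of_mul_le hab hcd (biimp_mul_biimp_le_biimp_mul a b c d)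
  · exact hF.mem_of_mul_le hab hcd (biimp_mul_biimp_le_biimp_himp a b c d)
  · have hi := hF.2.2.2 i _ h
    exact hF.mem_of_mul_le hi hi ((hf i).mul_map_biimp_le a b)

end IsIFilter

namespace IsRirigCon

variable {θ : A → A → Prop}

lemma isIFilter_filterOfCon (hf : ∀ i, f i 1 = 1) (hθ : IsRirigCon f θ) :
    IsIFilter f (filterOfCon θ) := by
  obtain ⟨hequiv, hsup, hmul, -, hmap⟩ := hθ
  refine ⟨⟨1, hequiv.refl 1⟩, fun x y hx hxy => ?_, fun x y hx hy => ?_, fun i x hx => ?_⟩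
  · simpa [filterOfCon, sup_eq_left.mpr hxy, sup_eq_right.mpr (Ririg.le_one y)] using
      hsup y y x 1 (hequiv.refl y) hx
  · simpa [filterOfCon] using hmul x 1 y 1 hx hy
  · simpa [filterOfCon, hf i] using hmap i x 1 hx

lemma rel_sup_of_mul_le (hθ : IsRirigCon f θ) {e x y : A} (he : θ e 1) (hle : e * x ≤ y) :
    θ y (x ⊔ y) := by
  have h := hθ.2.1 _ _ _ _ (hθ.2.2.1 e 1 x x he (hθ.1.refl x)) (hθ.1.refl y)
  rwa [one_mul, sup_eq_right.mpr hle] at h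

lemma conOfFilter_filterOfCon (hθ : IsRirigCon f θ) : conOfFilter (filterOfCon θ) = θ := by
  ext x y
  refine ⟨fun h => ?_, fun h => ?_⟩
  · have hx : θ x (y ⊔ x) := hθ.rel_sup_of_mul_le h (by rw [biimp_comm]; exact biimp_mul_le y x)
    have hy : θ y (x ⊔ y) := hθ.rel_sup_of_mul_le h (biimp_mul_le x y)
    exact hθ.1.trans hx (sup_comm y x ▸ hθ.1.symm hy)
  · have hxy : θ (x ⇨ y) 1 := Ririg.himp_self y ▸ hθ.2.2.2.1 x y y y h (hθ.1.refl y)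
    have hyx : θ (y ⇨ x) 1 := Ririg.himp_self y ▸ hθ.2.2.2.1 y y x y (hθ.1.refl y) h
    simpa [conOfFilter, filterOfCon, biimp] using hθ.2.2.1 _ _ _ _ hxy hyx

end IsRirigCon

end

theorem stmt9 {A ι : Type*} [Ririg A] (f : ι → A → A) (hf : ∀ i, IsModal (f i)) :
    (∀ F : Set A, IsIFilter f F →
      IsRirigCon f (fun x y : A => (x ⇨ y) * (y ⇨ x) ∈ F) ∧
      {x : A | (fun x y : A => (x ⇨ y) * (y ⇨ x) ∈ F) x 1} = F) ∧
    (∀ θ : A → A → Prop, IsRirigCon f θ →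
      IsIFilter f {x : A | θ x 1} ∧
      (fun x y : A => (x ⇨ y) * (y ⇨ x) ∈ {x : A | θ x 1}) = θ) ∧
    (∀ F G : Set A, IsIFilter f F → IsIFilter f G →
      (F ⊆ G ↔ ∀ x y : A, (x ⇨ y) * (y ⇨ x) ∈ F → (x ⇨ y) * (y ⇨ x) ∈ G)) :=
  ⟨fun F hF => ⟨hF.isRirigCon_conOfFilter hf, filterOfCon_conOfFilter F⟩,
    fun _ hθ => ⟨hθ.isIFilter_filterOfCon fun i => (hf i).1, hθ.conOfFilter_filterOfCon⟩,
    fun _ _ _ _ => conOfFilter_le_conOfFilter_iff.symm⟩
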